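/- arXiv:2603.07514 — 4 statements merged into one kernel-verified Lean document; each statement's English description precedes it below -/
import Mathlib

section
/- Let τ > 0, η > 0, and let k_τ be the Gaussian kernel on ℝ^D. Let p and q be probability distributions on ℝ^D such that the relevant kernel expectations are finite. Define the drifting discrepancy field Δ_{p,q}(x) = η(V_{p,k_τ}(x) − V_{q,k_τ}(x)). Then Δ_{p,q}(x) = ητ²(s_{p,k_τ}(x) − s_{q,k_τ}(x)) for all x, and consequently the drifting objective satisfies E_{x∼q}[‖Δ_{p,q}(x)‖₂²] = η²τ⁴ E_{x∼q}[‖s_{p,k_τ}(x) − s_{q,k_τ}(x)‖₂²], i.e., it equals η²τ⁴ times the reverse Fisher divergence between the Gaussian-smoothed data distribution and the Gaussian-smoothed model distribution, evaluated under the model distribution. -/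
open MeasureTheory

/-- The Gaussian kernel with bandwidth `τ` on `ℝ^D`. -/
noncomputable def gaussKernel (D : ℕ) (τ : ℝ) (x y : EuclideanSpace ℝ (Fin D)) : ℝ :=
  Real.exp (-‖x - y‖ ^ 2 / (2 * τ ^ 2))

/-- The kernel-smoothed profile `π_k(x) = E_{y∼π}[k(x,y)]`. -/
noncomputable def smoothedProfile {D : ℕ}
    (k : EuclideanSpace ℝ (Fin D) → EuclideanSpace ℝ (Fin D) → ℝ)
    (π : Measure (EuclideanSpace ℝ (Fin D))) (x : EuclideanSpace ℝ (Fin D)) : ℝ :=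
  ∫ y, k x y ∂π

/-- The mean-shift direction `V_{π,k}(x)`. -/
noncomputable def meanShift {D : ℕ}
    (k : EuclideanSpace ℝ (Fin D) → EuclideanSpace ℝ (Fin D) → ℝ)
    (π : Measure (EuclideanSpace ℝ (Fin D))) (x : EuclideanSpace ℝ (Fin D)) :
    EuclideanSpace ℝ (Fin D) :=
  (smoothedProfile k π x)⁻¹ • ∫ y, k x y • (y - x) ∂π

/-- The kernel-induced score `s_{π,k}(x) = ∇_x log π_k(x)`. -/
noncomputable def kernelScore {D : ℕ}
    (k : EuclideanSpace ℝ (Fin D) → EuclideanSpace ℝ (Fin D) → ℝ)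
    (π : Measure (EuclideanSpace ℝ (Fin D))) (x : EuclideanSpace ℝ (Fin D)) :
    EuclideanSpace ℝ (Fin D) :=
  gradient (fun z => Real.log (smoothedProfile k π z)) x

/-- The drifting discrepancy field `Δ_{p,q}(x) = η (V_{p,k}(x) − V_{q,k}(x))`. -/
noncomputable def driftField {D : ℕ} (η : ℝ)
    (k : EuclideanSpace ℝ (Fin D) → EuclideanSpace ℝ (Fin D) → ℝ)
    (p q : Measure (EuclideanSpace ℝ (Fin D))) (x : EuclideanSpace ℝ (Fin D)) :
    EuclideanSpace ℝ (Fin D) :=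
  η • (meanShift k p x - meanShift k q x)

/-! The Gaussian kernel satisfies `∇ₓ k_τ(x, y) = τ⁻² k_τ(x, y) (y - x)`, and since
`t e^{-t²/(2τ²)} ≤ τ` this derivative is bounded by `τ⁻¹` uniformly in `x` and `y`. Hence one may
differentiate under the integral against any finite measure: `∇π_k = τ⁻² E_π[k_τ(·, y)(y - x)]`,
so `s_{π,k} = ∇π_k / π_k = τ⁻² V_{π,k}`. The drifting field is therefore `ητ²(s_p - s_q)`, and the
objective identity follows by taking squared norms and integrating. -/

theorem Real.mul_exp_neg_sq_div_le {τ : ℝ} (hτ : 0 < τ) (t : ℝ) :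
    t * Real.exp (-t ^ 2 / (2 * τ ^ 2)) ≤ τ := by
  have key : t ≤ τ * (t ^ 2 / (2 * τ ^ 2) + 1) := by
    have : τ * (t ^ 2 / (2 * τ ^ 2) + 1) - t = ((t - τ) ^ 2 + τ ^ 2) / (2 * τ) := by
      field_simp; ring
    nlinarith [show 0 ≤ ((t - τ) ^ 2 + τ ^ 2) / (2 * τ) by positivity]
  rw [neg_div, Real.exp_neg, ← div_eq_mul_inv, div_le_iff₀ (Real.exp_pos _)]
  exact key.trans (mul_le_mul_of_nonneg_left (Real.add_one_le_exp _) hτ.le)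

section GaussKernel

variable {D : ℕ} {τ : ℝ}

local notation "E" => EuclideanSpace ℝ (Fin D)

theorem gaussKernel_pos (x y : E) : 0 < gaussKernel D τ x y := Real.exp_pos _

theorem gaussKernel_le_one (x y : E) : gaussKernel D τ x y ≤ 1 :=
  Real.exp_le_one_iff.2 (div_nonpos_of_nonpos_of_nonneg (by simp) (by positivity))

theorem continuous_gaussKernel (x : E) : Continuous (gaussKernel D τ x) := by
  unfold gaussKernel
  fun_prop

theorem integrable_gaussKernel (π : Measure E) [IsFiniteMeasure π] (x : E) :
    Integrable (gaussKernel D τ x) π :=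
  Integrable.of_bound (continuous_gaussKernel x).aestronglyMeasurable 1
    (ae_of_all _ fun y => by
      rw [Real.norm_of_nonneg (gaussKernel_pos x y).le]
      exact gaussKernel_le_one x y)

theorem hasFDerivAt_gaussKernel (x y : E) :
    HasFDerivAt (gaussKernel D τ · y)
      (innerSL ℝ ((τ ^ 2)⁻¹ • gaussKernel D τ x y • (y - x))) x := by
  have h := (((hasFDerivAt_id x).sub_const y).norm_sq.neg.mul_const (2 * τ ^ 2)⁻¹).exp
  simp only [gaussKernel, div_eq_mul_inv]
  refine h.congr_fderiv ?_
  ext w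
  simp only [id_eq, Pi.neg_apply, mul_inv_rev, neg_mul, map_sub, ContinuousLinearMap.comp_id,
    smul_neg, neg_apply, smul_apply, sub_apply, coe_innerSL_apply, nsmul_eq_mul, Nat.cast_ofNat,
    smul_eq_mul, map_smul]
  ring

theorem norm_gaussKernel_smul_sub_le (hτ : 0 < τ) (x y : E) :
    ‖gaussKernel D τ x y • (y - x)‖ ≤ τ := by
  rw [norm_smul, Real.norm_of_nonneg (gaussKernel_pos x y).le, mul_comm, norm_sub_rev]
  exact Real.mul_exp_neg_sq_div_le hτ _

theorem integrable_gaussKernel_smul_sub (hτ : 0 < τ) (π : Measure E) [IsFiniteMeasure π] (x : E) :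
    Integrable (fun y => gaussKernel D τ x y • (y - x)) π :=
  Integrable.of_bound
    ((continuous_gaussKernel x).smul (continuous_id.sub continuous_const)).aestronglyMeasurable τ
    (ae_of_all _ (norm_gaussKernel_smul_sub_le hτ x))

theorem hasGradientAt_smoothedProfile_gaussKernel (hτ : 0 < τ) (π : Measure E)
    [IsFiniteMeasure π] (x : E) :
    HasGradientAt (smoothedProfile (gaussKernel D τ) π)
      ((τ ^ 2)⁻¹ • ∫ y, gaussKernel D τ x y • (y - x) ∂π) x := by
  have h := hasFDerivAt_integral_of_dominated_of_fderiv_le (μ := π) (x₀ := x)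
    (F := gaussKernel D τ)
    (F' := fun z y => innerSL ℝ ((τ ^ 2)⁻¹ • gaussKernel D τ z y • (y - z)))
    (bound := fun _ => τ⁻¹) Filter.univ_mem
    (Filter.Eventually.of_forall fun z => (continuous_gaussKernel z).aestronglyMeasurable)
    (integrable_gaussKernel π x)
    (by
      have := continuous_gaussKernel (D := D) (τ := τ) x
      exact Continuous.aestronglyMeasurable (by fun_prop))
    (ae_of_all _ fun y z _ => by
      rw [innerSL_apply_norm, norm_smul, Real.norm_of_nonneg (by positivity)]
      calc (τ ^ 2)⁻¹ * ‖gaussKernel D τ z y • (y - z)‖ ≤ (τ ^ 2)⁻¹ * τ := by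
            gcongr; exact norm_gaussKernel_smul_sub_le hτ z y
        _ = τ⁻¹ := by field_simp)
    (integrable_const _)
    (ae_of_all _ fun y z _ => hasFDerivAt_gaussKernel z y)
  have hint : Integrable (fun y => (τ ^ 2)⁻¹ • gaussKernel D τ x y • (y - x)) π :=
    (integrable_gaussKernel_smul_sub hτ π x).smul (τ ^ 2)⁻¹
  rw [(innerSL ℝ).integral_comp_comm hint, integral_smul] at h
  exact hasGradientAt_iff_hasFDerivAt.2 h

theorem smoothedProfile_gaussKernel_pos (π : Measure E) [IsFiniteMeasure π] [NeZero π] (x : E) :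
    0 < smoothedProfile (gaussKernel D τ) π x :=
  (integral_pos_iff_support_of_nonneg (fun y => (gaussKernel_pos x y).le)
    (integrable_gaussKernel π x)).2 (by
      simp [Function.support, (gaussKernel_pos x _).ne', NeZero.ne π])

theorem kernelScore_gaussKernel (hτ : 0 < τ) (π : Measure E) [IsFiniteMeasure π] [NeZero π]
    (x : E) :
    kernelScore (gaussKernel D τ) π x = (τ ^ 2)⁻¹ • meanShift (gaussKernel D τ) π x := by
  have h := (hasGradientAt_iff_hasFDerivAt.1
    (hasGradientAt_smoothedProfile_gaussKernel hτ π x)).log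
    (smoothedProfile_gaussKernel_pos π x).ne'
  rw [← map_smul, ← hasGradientAt_iff_hasFDerivAt] at h
  rw [kernelScore, h.gradient, meanShift, smul_comm]

theorem driftField_gaussKernel (hτ : 0 < τ) (η : ℝ) (p q : Measure E) [IsFiniteMeasure p]
    [NeZero p] [IsFiniteMeasure q] [NeZero q] (x : E) :
    driftField η (gaussKernel D τ) p q x
      = (η * τ ^ 2) • (kernelScore (gaussKernel D τ) p x - kernelScore (gaussKernel D τ) q x) := by
  rw [kernelScore_gaussKernel hτ, kernelScore_gaussKernel hτ, ← smul_sub, smul_smul, driftField,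
    mul_assoc, mul_inv_cancel₀ (by positivity), mul_one]

end GaussKernel

theorem gaussian_drifting_eq_score_matching_general {D : ℕ} (τ η : ℝ) (hτ : 0 < τ)
    (p q : Measure (EuclideanSpace ℝ (Fin D)))
    [IsProbabilityMeasure p] [IsProbabilityMeasure q] :
    (∀ x, driftField η (gaussKernel D τ) p q x
        = (η * τ ^ 2) • (kernelScore (gaussKernel D τ) p x - kernelScore (gaussKernel D τ) q x))
    ∧
    (∫ x, ‖driftField η (gaussKernel D τ) p q x‖ ^ 2 ∂q)
      = η ^ 2 * τ ^ 4 *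
        ∫ x, ‖kernelScore (gaussKernel D τ) p x - kernelScore (gaussKernel D τ) q x‖ ^ 2 ∂q := by
  refine ⟨driftField_gaussKernel hτ η p q, ?_⟩
  simp_rw [driftField_gaussKernel hτ η p q, norm_smul, mul_pow, Real.norm_eq_abs, sq_abs]
  rw [integral_const_mul]
  ring

/-- Gaussian-kernel drifting equals smoothed-score matching.
For the Gaussian kernel with bandwidth `τ > 0` and step size `η > 0`, the drifting
discrepancy field satisfies `Δ_{p,q}(x) = ητ² (s_{p,k_τ}(x) − s_{q,k_τ}(x))` for all `x`, and
consequently the drifting objective equals `η²τ⁴` times the reverse Fisher divergence between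
the Gaussian-smoothed data and model distributions, evaluated under the model distribution. -/
theorem gaussian_drifting_eq_score_matching {D : ℕ} (τ η : ℝ) (hτ : 0 < τ) (hη : 0 < η)
    (p q : Measure (EuclideanSpace ℝ (Fin D)))
    [IsProbabilityMeasure p] [IsProbabilityMeasure q]
    (hkp : ∀ x, Integrable (fun y => gaussKernel D τ x y) p)
    (hkp1 : ∀ x, Integrable (fun y => gaussKernel D τ x y * ‖y‖) p)
    (hkq : ∀ x, Integrable (fun y => gaussKernel D τ x y) q)
    (hkq1 : ∀ x, Integrable (fun y => gaussKernel D τ x y * ‖y‖) q) :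
    (∀ x, driftField η (gaussKernel D τ) p q x
        = (η * τ ^ 2) • (kernelScore (gaussKernel D τ) p x - kernelScore (gaussKernel D τ) q x))
    ∧
    (∫ x, ‖driftField η (gaussKernel D τ) p q x‖ ^ 2 ∂q)
      = η ^ 2 * τ ^ 4 *
        ∫ x, ‖kernelScore (gaussKernel D τ) p x - kernelScore (gaussKernel D τ) q x‖ ^ 2 ∂q :=
  gaussian_drifting_eq_score_matching_general τ η hτ p q
end

section
/- Let k_τ(x,y) = exp(−ρ(‖x−y‖₂/τ)) be a translation-invariant radial kernel on ℝ^D with ρ : [0,∞) → ℝ differentiable, τ > 0, and define b_τ(r) = ρ'(r/τ)/(r/τ). Let π be a probability distribution with density such that the relevant expectations are finite, and let π_τ(·|x) denote the kernel-reweighted law with density proportional to k_τ(x,y)π(y). Then wherever the kernel-induced score s_{π,k_τ}(x) = ∇_x log E_{y∼π}[k_τ(x,y)] exists, it satisfies τ² s_{π,k_τ}(x) = E_{y∼π_τ(·|x)}[ b_τ(‖x−y‖₂) (y − x) ]. -/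
/-!
Differentiate `π_k(x) = ∫ k(x, y) dπ(y)` under the integral sign. Off the diagonal `y = x`, which is
`π`-null because `π` has a density, the chain rule through `r = ‖x - y‖` gives
`∇ₓ k(x, y) = τ⁻² k(x, y) b_τ(‖x - y‖) (y - x)`, since the profile `r ↦ exp (-ρ (r / τ))` has
derivative `-τ⁻² r b_τ(r) exp (-ρ (r / τ))`. The domination hypothesis bounds this derivative at
every radius realised in a ball around `x`; by the mean value theorem the sections `x' ↦ k(x', y)`
are then Lipschitz on that ball with an integrable constant, which justifies the exchange. The
chain rule for `log` finally divides by `π_k(x)`.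
-/

open MeasureTheory

/-- A translation-invariant radial kernel `k_τ(x,y) = exp(−ρ(‖x−y‖₂/τ))`. -/
noncomputable def radialKernel (D : ℕ) (ρ : ℝ → ℝ) (τ : ℝ)
    (x y : EuclideanSpace ℝ (Fin D)) : ℝ :=
  Real.exp (-ρ (‖x - y‖ / τ))

/-- The radius-dependent weight `b_τ(r) = ρ'(r/τ)/(r/τ)`. -/
noncomputable def radialWeight (ρ' : ℝ → ℝ) (τ r : ℝ) : ℝ :=
  ρ' (r / τ) / (r / τ)

/-- Expectation of a vector-valued function under the kernel-reweighted conditional law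
`π_τ(y|x) ∝ k(x,y) π(y)`:  `E_{y∼π_τ(·|x)}[g(y)] = E_π[k(x,·) g] / E_π[k(x,·)]`. -/
noncomputable def reweightedExp {D : ℕ}
    (k : EuclideanSpace ℝ (Fin D) → EuclideanSpace ℝ (Fin D) → ℝ)
    (π : Measure (EuclideanSpace ℝ (Fin D))) (x : EuclideanSpace ℝ (Fin D))
    (g : EuclideanSpace ℝ (Fin D) → EuclideanSpace ℝ (Fin D)) :
    EuclideanSpace ℝ (Fin D) :=
  (smoothedProfile k π x)⁻¹ • ∫ y, k x y • g y ∂π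

open Set Metric Filter Topology InnerProductSpace
open scoped NNReal

section Gradient

variable {E : Type*} [NormedAddCommGroup E] [InnerProductSpace ℝ E] [CompleteSpace E]

theorem HasGradientAt.log {f : E → ℝ} {f' x : E} (hf : HasGradientAt f f' x) (hx : f x ≠ 0) :
    HasGradientAt (fun z => Real.log (f z)) ((f x)⁻¹ • f') x := by
  rw [hasGradientAt_iff_hasFDerivAt] at hf ⊢
  simpa using hf.log hx

theorem hasGradientAt_norm {v : E} (hv : v ≠ 0) : HasGradientAt (‖·‖) (‖v‖⁻¹ • v) v := by
  have hsq : HasFDerivAt (fun z : E => ‖z‖ ^ 2) (2 • innerSL ℝ v) v :=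
    (hasStrictFDerivAt_norm_sq v).hasFDerivAt
  have hsqrt := (Real.hasDerivAt_sqrt (by positivity : ‖v‖ ^ 2 ≠ 0)).comp_hasFDerivAt v hsq
  simp only [Function.comp_def, Real.sqrt_sq (norm_nonneg _)] at hsqrt
  rw [hasGradientAt_iff_hasFDerivAt]
  refine hsqrt.congr_fderiv ?_
  ext w
  simp
  ring

theorem HasDerivAt.hasGradientAt_norm_sub {φ : ℝ → ℝ} {d : ℝ} {x y : E}
    (hφ : HasDerivAt φ d ‖x - y‖) (hxy : x ≠ y) :
    HasGradientAt (fun z => φ ‖z - y‖) ((d / ‖x - y‖) • (x - y)) x := by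
  have hnorm : HasFDerivAt (fun z => ‖z - y‖) (toDual ℝ E (‖x - y‖⁻¹ • (x - y))) x := by
    simpa [Function.comp_def] using
      (hasGradientAt_norm (sub_ne_zero.2 hxy)).hasFDerivAt.comp x ((hasFDerivAt_id x).sub_const y)
  rw [hasGradientAt_iff_hasFDerivAt]
  refine (hφ.comp_hasFDerivAt x hnorm).congr_fderiv ?_
  ext w
  simp
  ring

theorem hasGradientAt_integral_of_dominated_loc_of_lip {α : Type*} [MeasurableSpace α]
    {μ : Measure α} {F : E → α → ℝ} {G : α → E} {bound : α → ℝ} {s : Set E} {x : E}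
    (hs : s ∈ 𝓝 x) (hF_meas : ∀ᶠ z in 𝓝 x, AEStronglyMeasurable (F z) μ)
    (hF_int : Integrable (F x) μ) (hG_int : Integrable G μ)
    (h_lip : ∀ᵐ a ∂μ, LipschitzOnWith (Real.nnabs (bound a)) (F · a) s)
    (bound_integrable : Integrable bound μ)
    (h_diff : ∀ᵐ a ∂μ, HasGradientAt (F · a) (G a) x) :
    HasGradientAt (fun z => ∫ a, F z a ∂μ) (∫ a, G a ∂μ) x := by
  have hderiv := (hasFDerivAt_integral_of_dominated_loc_of_lip hs hF_meas hF_int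
    ((innerSL ℝ).continuous.comp_aestronglyMeasurable hG_int.aestronglyMeasurable) h_lip
    bound_integrable (h_diff.mono fun a ha => ha.hasFDerivAt)).2
  rw [hasGradientAt_iff_hasFDerivAt]
  rwa [ContinuousLinearMap.integral_comp_comm _ hG_int] at hderiv

end Gradient

theorem Convex.lipschitzOnWith_of_abs_hasDerivAt_le {D : Set ℝ} (hD : Convex ℝ D)
    {f f' : ℝ → ℝ} {C : ℝ≥0} (hf : ContinuousOn f D)
    (hf' : ∀ r ∈ interior D, HasDerivAt f (f' r) r) (bound : ∀ r ∈ interior D, |f' r| ≤ C) :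
    LipschitzOnWith C f D := by
  have hdiff : DifferentiableOn ℝ f (interior D) := fun r hr =>
    (hf' r hr).differentiableAt.differentiableWithinAt
  have hderiv : ∀ r ∈ interior D, |deriv f r| ≤ C := fun r hr => (hf' r hr).deriv ▸ bound r hr
  have upper := hD.image_sub_le_mul_sub_of_deriv_le hf hdiff fun r hr => (abs_le.1 (hderiv r hr)).2
  have lower := hD.mul_sub_le_image_sub_of_le_deriv hf hdiff fun r hr => (abs_le.1 (hderiv r hr)).1
  refine LipschitzOnWith.of_le_add_mul C fun a ha b hb => ?_
  rw [Real.dist_eq]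
  rcases le_total a b with hab | hab
  · rw [abs_of_nonpos (sub_nonpos.2 hab)]
    linarith [lower a ha b hb hab]
  · rw [abs_of_nonneg (sub_nonneg.2 hab)]
    linarith [upper b hb a ha hab]

noncomputable def radialProfile (ρ : ℝ → ℝ) (τ r : ℝ) : ℝ :=
  Real.exp (-ρ (r / τ))

section Radial

variable {D : ℕ} {ρ ρ' : ℝ → ℝ} {τ : ℝ}

theorem radialKernel_eq_radialProfile (x y : EuclideanSpace ℝ (Fin D)) :
    radialKernel D ρ τ x y = radialProfile ρ τ ‖x - y‖ := rfl

theorem hasDerivAt_radialProfile {r : ℝ} (hρ : HasDerivAt ρ (ρ' (r / τ)) (r / τ)) :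
    HasDerivAt (radialProfile ρ τ) (-(ρ' (r / τ) / τ) * radialProfile ρ τ r) r := by
  have hdiv : HasDerivAt (fun s : ℝ => s / τ) τ⁻¹ r := by
    simpa using (hasDerivAt_id r).div_const τ
  refine ((hρ.comp r hdiv).neg).exp.congr_deriv ?_
  simp only [radialProfile, Function.comp_apply, Pi.neg_apply]
  ring

theorem continuous_radialProfile (hρ : Continuous ρ) : Continuous (radialProfile ρ τ) := by
  unfold radialProfile; fun_prop

theorem radialProfile_deriv_div_eq (hτ : τ ≠ 0) (r : ℝ) :
    -(ρ' (r / τ) / τ) * radialProfile ρ τ r / r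
      = -((τ ^ 2)⁻¹ * (radialProfile ρ τ r * radialWeight ρ' τ r)) := by
  rcases eq_or_ne r 0 with rfl | hr
  · simp [radialWeight]
  · unfold radialWeight; field_simp

theorem abs_radialProfile_deriv_eq (hτ : 0 < τ) {r : ℝ} (hr : 0 < r) :
    |-(ρ' (r / τ) / τ) * radialProfile ρ τ r|
      = (τ ^ 2)⁻¹ * |radialWeight ρ' τ r| * r * radialProfile ρ τ r := by
  unfold radialWeight radialProfile
  rw [abs_mul, abs_neg, abs_div, abs_div, abs_of_pos hτ, abs_of_pos (div_pos hr hτ),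
    abs_of_pos (Real.exp_pos _)]
  field_simp

theorem hasGradientAt_radialKernel (hρ : ∀ r, HasDerivAt ρ (ρ' r) r) (hτ : τ ≠ 0)
    {x y : EuclideanSpace ℝ (Fin D)} (hxy : x ≠ y) :
    HasGradientAt (fun z => radialKernel D ρ τ z y)
      ((τ ^ 2)⁻¹ • (radialKernel D ρ τ x y * radialWeight ρ' τ ‖x - y‖) • (y - x)) x := by
  have h : HasGradientAt (fun z => radialKernel D ρ τ z y) _ x :=
    (hasDerivAt_radialProfile (hρ _)).hasGradientAt_norm_sub hxy
  rwa [radialProfile_deriv_div_eq hτ, neg_smul, ← smul_neg, neg_sub, ← smul_smul] at h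

theorem lipschitzOnWith_radialKernel (hρ : ∀ r, HasDerivAt ρ (ρ' r) r) (hτ : 0 < τ)
    {s : Set (EuclideanSpace ℝ (Fin D))} (hs : Convex ℝ s) {y : EuclideanSpace ℝ (Fin D)}
    {C : ℝ≥0} (hC : ∀ x' ∈ s,
      (τ ^ 2)⁻¹ * |radialWeight ρ' τ ‖x' - y‖| * ‖y - x'‖ * radialKernel D ρ τ x' y ≤ C) :
    LipschitzOnWith C (fun x' => radialKernel D ρ τ x' y) s := by
  set R := (fun x' => ‖x' - y‖) '' s
  have hR : Convex ℝ R := (isPreconnected_iff_ordConnected.1 <| hs.isPreconnected.image _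
    (continuous_id.sub continuous_const).norm.continuousOn).convex
  -- only interior radii are needed, so the junk value `radialWeight ρ' τ 0 = 0` never enters
  have hR_pos : interior R ⊆ Ioi 0 := by
    rw [← interior_Ici]
    exact interior_mono (image_subset_iff.2 fun _ _ => norm_nonneg _)
  have hρ_cont : Continuous ρ := continuous_iff_continuousAt.2 fun r => (hρ r).continuousAt
  have hprofile : LipschitzOnWith C (radialProfile ρ τ) R := by
    refine hR.lipschitzOnWith_of_abs_hasDerivAt_le (continuous_radialProfile hρ_cont).continuousOn
      (fun r _ => hasDerivAt_radialProfile (hρ _)) fun r hr => ?_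
    obtain ⟨x', hx', rfl⟩ := interior_subset hr
    rw [abs_radialProfile_deriv_eq hτ (hR_pos hr)]
    simpa only [norm_sub_rev y x', radialKernel_eq_radialProfile] using hC x' hx'
  have hdist : LipschitzWith 1 fun x' : EuclideanSpace ℝ (Fin D) => ‖x' - y‖ := by
    simpa only [dist_eq_norm] using LipschitzWith.dist_left y
  have h := hprofile.comp hdist.lipschitzOnWith (mapsTo_image _ s)
  rwa [mul_one] at h

end Radial

theorem radial_weighted_score_ratio_general {D : ℕ} (ρ ρ' : ℝ → ℝ) (τ : ℝ) (hτ : 0 < τ)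
    (hρ : ∀ r, HasDerivAt ρ (ρ' r) r)
    (π : Measure (EuclideanSpace ℝ (Fin D)))
    (hac : π ≪ volume)
    (x : EuclideanSpace ℝ (Fin D))
    (hk : Integrable (fun y => radialKernel D ρ τ x y) π)
    (hkb : Integrable
      (fun y => (radialKernel D ρ τ x y * radialWeight ρ' τ ‖x - y‖) • (y - x)) π)
    (hpos : 0 < smoothedProfile (radialKernel D ρ τ) π x)
    (hdom : ∃ ε > 0, ∃ g : EuclideanSpace ℝ (Fin D) → ℝ, Integrable g π ∧
      ∀ᵐ y ∂π, ∀ x' ∈ Metric.ball x ε,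
        (τ ^ 2)⁻¹ * |radialWeight ρ' τ ‖x' - y‖| * ‖y - x'‖ * radialKernel D ρ τ x' y ≤ g y) :
    τ ^ 2 • kernelScore (radialKernel D ρ τ) π x
      = reweightedExp (radialKernel D ρ τ) π x
          (fun y => radialWeight ρ' τ ‖x - y‖ • (y - x)) := by
  rcases eq_or_ne D 0 with rfl | hD
  · exact Subsingleton.elim _ _
  have : Nontrivial (EuclideanSpace ℝ (Fin D)) := by
    have : Nonempty (Fin D) := ⟨⟨0, Nat.pos_of_ne_zero hD⟩⟩
    infer_instance
  -- the kernel need not be differentiable in `x` at `x = y`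
  have hxae : ∀ᵐ y ∂π, y ≠ x := by
    rw [ae_iff]
    simpa using hac (measure_singleton x)
  obtain ⟨ε, hε, g, hg, hbound⟩ := hdom
  have hkernel_cont : ∀ x', Continuous (radialKernel D ρ τ x') := fun x' =>
    (continuous_radialProfile (continuous_iff_continuousAt.2 fun r => (hρ r).continuousAt)).comp
      (continuous_const.sub continuous_id).norm
  have hgrad : HasGradientAt (smoothedProfile (radialKernel D ρ τ) π)
      (∫ y, (τ ^ 2)⁻¹ • (radialKernel D ρ τ x y * radialWeight ρ' τ ‖x - y‖) • (y - x) ∂π) x :=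
    hasGradientAt_integral_of_dominated_loc_of_lip (ball_mem_nhds x hε)
      (.of_forall fun x' => (hkernel_cont x').aestronglyMeasurable) hk (hkb.smul (τ ^ 2)⁻¹)
      (hbound.mono fun y hy => lipschitzOnWith_radialKernel hρ hτ (convex_ball x ε)
        fun x' hx' => (hy x' hx').trans (le_abs_self _)) hg
      (hxae.mono fun y hy => hasGradientAt_radialKernel hρ hτ.ne' hy.symm)
  rw [kernelScore, (HasGradientAt.log hgrad hpos.ne').gradient, reweightedExp, integral_smul,
    smul_comm, smul_smul (τ ^ 2), mul_inv_cancel₀ (pow_ne_zero 2 hτ.ne'), one_smul]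
  simp_rw [smul_smul]

/-- weighted-score representation for radial kernels.
For a radial kernel `k_τ(x,y) = exp(−ρ(‖x−y‖₂/τ))` with `ρ` differentiable and a
distribution `π` with density whose relevant expectations are finite, wherever the
kernel-induced score exists it satisfies
`τ² s_{π,k_τ}(x) = E_{y∼π_τ(·|x)}[ b_τ(‖x−y‖₂) (y − x) ]`. -/
theorem radial_weighted_score_ratio {D : ℕ} (ρ ρ' : ℝ → ℝ) (τ : ℝ) (hτ : 0 < τ)
    (hρ : ∀ r, HasDerivAt ρ (ρ' r) r)
    (π : Measure (EuclideanSpace ℝ (Fin D))) [IsProbabilityMeasure π]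
    (hac : π ≪ volume)
    (x : EuclideanSpace ℝ (Fin D))
    (hk : Integrable (fun y => radialKernel D ρ τ x y) π)
    (hkb : Integrable
      (fun y => (radialKernel D ρ τ x y * radialWeight ρ' τ ‖x - y‖) • (y - x)) π)
    (hpos : 0 < smoothedProfile (radialKernel D ρ τ) π x)
    (hdom : ∃ ε > 0, ∃ g : EuclideanSpace ℝ (Fin D) → ℝ, Integrable g π ∧
      ∀ᵐ y ∂π, ∀ x' ∈ Metric.ball x ε,
        (τ ^ 2)⁻¹ * |radialWeight ρ' τ ‖x' - y‖| * ‖y - x'‖ * radialKernel D ρ τ x' y ≤ g y) :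
    τ ^ 2 • kernelScore (radialKernel D ρ τ) π x
      = reweightedExp (radialKernel D ρ τ) π x
          (fun y => radialWeight ρ' τ ‖x - y‖ • (y - x)) :=
  radial_weighted_score_ratio_general ρ ρ' τ hτ hρ π hac x hk hkb hpos hdom
end

section
/- (Mixed distances concentrate in L².) Let R₀ > 0, σ ≥ 0, κ ≥ 0, and D ≥ 1. Let x and y be independent random vectors in ℝ^D satisfying E[(‖x‖₂² − R₀²)²] ≤ σ²R₀⁴/D, E[(‖y‖₂² − R₀²)²] ≤ σ²R₀⁴/D, and E[⟨x,y⟩²] ≤ κR₀⁴/D. Set S = ‖x − y‖₂ and ρ = √2·R₀. Then E[(S − ρ)²] ≤ 3(2σ² + 4κ)R₀²/D. -/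
/-!
Since `S + ρ ≥ ρ`, the factorisation `S² − ρ² = (S − ρ)(S + ρ)`
gives `(S − ρ)² ≤ (S² − ρ²)² / ρ²`, and polarisation writes `S² − ρ²` as
`(‖x‖² − R₀²) + (‖y‖² − R₀²) − 2⟪x, y⟫`. By `(u + v + w)² ≤ 3(u² + v² + w²)` the pointwise error
`(S − ρ)²` is therefore dominated by `3/(2R₀²)` times the sum of the three controlled second
moments; integrating this domination gives the bound, even with the constant halved.
-/

open MeasureTheory ProbabilityTheory

lemma sq_sub_mul_sq_le_sq_sub_sq {s r : ℝ} (hs : 0 ≤ s) (hr : 0 ≤ r) :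
    (s - r) ^ 2 * r ^ 2 ≤ (s ^ 2 - r ^ 2) ^ 2 := by
  have hfactor : (s ^ 2 - r ^ 2) ^ 2 = (s - r) ^ 2 * (s + r) ^ 2 := by ring
  rw [hfactor]
  gcongr
  linarith

lemma add_add_sq_le_three_mul (u v w : ℝ) :
    (u + v + w) ^ 2 ≤ 3 * (u ^ 2 + v ^ 2 + w ^ 2) := by
  nlinarith [sq_nonneg (u - v), sq_nonneg (v - w), sq_nonneg (u - w)]

section InnerProductSpace

variable {E : Type*} [NormedAddCommGroup E] [InnerProductSpace ℝ E]

lemma norm_sub_sq_sub_two_mul_sq (x y : E) (R : ℝ) :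
    ‖x - y‖ ^ 2 - 2 * R ^ 2 = (‖x‖ ^ 2 - R ^ 2) + (‖y‖ ^ 2 - R ^ 2) - 2 * inner ℝ x y := by
  rw [norm_sub_sq_real]
  ring

lemma norm_sub_sub_sqrt_two_mul_sq_le {R : ℝ} (hR : 0 < R) (x y : E) :
    (‖x - y‖ - Real.sqrt 2 * R) ^ 2 ≤
      3 / (2 * R ^ 2) * ((‖x‖ ^ 2 - R ^ 2) ^ 2 + (‖y‖ ^ 2 - R ^ 2) ^ 2 + 4 * inner ℝ x y ^ 2) := by
  have hρ : (Real.sqrt 2 * R) ^ 2 = 2 * R ^ 2 := by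
    rw [mul_pow, Real.sq_sqrt zero_le_two]
  have hfactor := sq_sub_mul_sq_le_sq_sub_sq (norm_nonneg (x - y))
    (by positivity : 0 ≤ Real.sqrt 2 * R)
  have hpolar := add_add_sq_le_three_mul (‖x‖ ^ 2 - R ^ 2) (‖y‖ ^ 2 - R ^ 2) (-2 * inner ℝ x y)
  rw [hρ, norm_sub_sq_sub_two_mul_sq] at hfactor
  rw [div_mul_eq_mul_div, le_div_iff₀ (by positivity)]
  nlinarith

end InnerProductSpace

theorem mixed_distance_L2_concentration_general {D : ℕ}
    (R₀ σ κ : ℝ) (hR₀ : 0 < R₀) (hκ : 0 ≤ κ)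
    {Ω : Type*} [MeasureSpace Ω] [IsProbabilityMeasure (ℙ : Measure Ω)]
    (x y : Ω → EuclideanSpace ℝ (Fin D))
    (hx2 : Integrable (fun ω => (‖x ω‖ ^ 2 - R₀ ^ 2) ^ 2) ℙ)
    (hy2 : Integrable (fun ω => (‖y ω‖ ^ 2 - R₀ ^ 2) ^ 2) ℙ)
    (hip2 : Integrable (fun ω => (inner ℝ (x ω) (y ω) : ℝ) ^ 2) ℙ)
    (hxshell : ∫ ω, (‖x ω‖ ^ 2 - R₀ ^ 2) ^ 2 ∂ℙ ≤ σ ^ 2 * R₀ ^ 4 / D)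
    (hyshell : ∫ ω, (‖y ω‖ ^ 2 - R₀ ^ 2) ^ 2 ∂ℙ ≤ σ ^ 2 * R₀ ^ 4 / D)
    (hip : ∫ ω, (inner ℝ (x ω) (y ω) : ℝ) ^ 2 ∂ℙ ≤ κ * R₀ ^ 4 / D) :
    ∫ ω, (‖x ω - y ω‖ - Real.sqrt 2 * R₀) ^ 2 ∂ℙ
      ≤ 3 * (2 * σ ^ 2 + 4 * κ) * R₀ ^ 2 / D := by
  have hxy : Integrable (fun ω => (‖x ω‖ ^ 2 - R₀ ^ 2) ^ 2 + (‖y ω‖ ^ 2 - R₀ ^ 2) ^ 2) ℙ :=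
    hx2.add hy2
  have hip4 : Integrable (fun ω => 4 * inner ℝ (x ω) (y ω) ^ 2) ℙ := hip2.const_mul 4
  have hhalf : 3 / (2 * R₀ ^ 2) * ((2 * σ ^ 2 + 4 * κ) * R₀ ^ 4 / D)
      = 3 * (2 * σ ^ 2 + 4 * κ) * R₀ ^ 2 / D / 2 := by
    field_simp
  have hrhs : 0 ≤ 3 * (2 * σ ^ 2 + 4 * κ) * R₀ ^ 2 / D := by positivity
  calc ∫ ω, (‖x ω - y ω‖ - Real.sqrt 2 * R₀) ^ 2 ∂ℙ
      ≤ ∫ ω, 3 / (2 * R₀ ^ 2) * ((‖x ω‖ ^ 2 - R₀ ^ 2) ^ 2 + (‖y ω‖ ^ 2 - R₀ ^ 2) ^ 2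
          + 4 * inner ℝ (x ω) (y ω) ^ 2) ∂ℙ :=
        integral_mono_of_nonneg (ae_of_all _ fun _ => sq_nonneg _) ((hxy.add hip4).const_mul _)
          (ae_of_all _ fun ω => norm_sub_sub_sqrt_two_mul_sq_le hR₀ (x ω) (y ω))
    _ = 3 / (2 * R₀ ^ 2) * (∫ ω, (‖x ω‖ ^ 2 - R₀ ^ 2) ^ 2 ∂ℙ
          + ∫ ω, (‖y ω‖ ^ 2 - R₀ ^ 2) ^ 2 ∂ℙ + 4 * ∫ ω, inner ℝ (x ω) (y ω) ^ 2 ∂ℙ) := by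
        rw [integral_const_mul, integral_add hxy hip4,
          integral_add hx2 hy2, integral_const_mul]
    _ ≤ 3 / (2 * R₀ ^ 2) * ((2 * σ ^ 2 + 4 * κ) * R₀ ^ 4 / D) := by
        gcongr
        linarith [show (2 * σ ^ 2 + 4 * κ) * R₀ ^ 4 / D
          = σ ^ 2 * R₀ ^ 4 / D + σ ^ 2 * R₀ ^ 4 / D + 4 * (κ * R₀ ^ 4 / D) by ring]
    _ ≤ 3 * (2 * σ ^ 2 + 4 * κ) * R₀ ^ 2 / D := by linarith

/-- Mixed distances concentrate in L².
Let `x, y` be independent random vectors in `ℝ^D` with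
`E[(‖x‖² − R₀²)²] ≤ σ²R₀⁴/D`, `E[(‖y‖² − R₀²)²] ≤ σ²R₀⁴/D`, and `E[⟨x,y⟩²] ≤ κR₀⁴/D`.
Then with `S = ‖x − y‖₂` and `ρ = √2·R₀`, one has `E[(S − ρ)²] ≤ 3(2σ² + 4κ)R₀²/D`. -/
theorem mixed_distance_L2_concentration {D : ℕ} (hD : 1 ≤ D)
    (R₀ σ κ : ℝ) (hR₀ : 0 < R₀) (hσ : 0 ≤ σ) (hκ : 0 ≤ κ)
    {Ω : Type*} [MeasureSpace Ω] [IsProbabilityMeasure (ℙ : Measure Ω)]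
    (x y : Ω → EuclideanSpace ℝ (Fin D))
    (hx : Measurable x) (hy : Measurable y)
    (hindep : IndepFun x y ℙ)
    (hx2 : Integrable (fun ω => (‖x ω‖ ^ 2 - R₀ ^ 2) ^ 2) ℙ)
    (hy2 : Integrable (fun ω => (‖y ω‖ ^ 2 - R₀ ^ 2) ^ 2) ℙ)
    (hip2 : Integrable (fun ω => (inner ℝ (x ω) (y ω) : ℝ) ^ 2) ℙ)
    (hxshell : ∫ ω, (‖x ω‖ ^ 2 - R₀ ^ 2) ^ 2 ∂ℙ ≤ σ ^ 2 * R₀ ^ 4 / D)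
    (hyshell : ∫ ω, (‖y ω‖ ^ 2 - R₀ ^ 2) ^ 2 ∂ℙ ≤ σ ^ 2 * R₀ ^ 4 / D)
    (hip : ∫ ω, (inner ℝ (x ω) (y ω) : ℝ) ^ 2 ∂ℙ ≤ κ * R₀ ^ 4 / D) :
    ∫ ω, (‖x ω - y ω‖ - Real.sqrt 2 * R₀) ^ 2 ∂ℙ
      ≤ 3 * (2 * σ ^ 2 + 4 * κ) * R₀ ^ 2 / D :=
  mixed_distance_L2_concentration_general R₀ σ κ hR₀ hκ x y hx2 hy2 hip2 hxshell hyshell hip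
end

section
/- (Fourth-moment bound for mixed distances.) Let R₀ > 0 and constants C₁, C₂ < ∞, and D ≥ 1. Let x and y be independent random vectors in ℝ^D satisfying E[(‖x‖₂² − R₀²)⁴] ≤ C₁R₀⁸/D², E[(‖y‖₂² − R₀²)⁴] ≤ C₁R₀⁸/D², and E[⟨x,y⟩⁴] ≤ C₂R₀⁸/D². Set S = ‖x − y‖₂ and ρ = √2·R₀. Then E[(S − ρ)⁴] ≤ (27(2C₁ + 16C₂)R₀⁴/4) / D². -/
/-!
Since `‖x - y‖² - 2R₀² = (‖x‖² - R₀²) + (‖y‖² - R₀²) - 2⟪x, y⟫` and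
`|S - ρ| ≤ |S² - ρ²| / ρ` for `S ≥ 0`, the power-mean inequality `(a + b + c)⁴ ≤ 27 (a⁴ + b⁴ + c⁴)`
bounds `(S - ρ)⁴` pointwise by `27 / (4 R₀⁴)` times a sum of the three controlled fourth powers;
integrating gives the claim.
-/

open MeasureTheory ProbabilityTheory

lemma add_add_pow_four_le (a b c : ℝ) : (a + b + c) ^ 4 ≤ 27 * (a ^ 4 + b ^ 4 + c ^ 4) := by
  nlinarith [sq_nonneg (a - b), sq_nonneg (b - c), sq_nonneg (a - c), sq_nonneg (a + b + c),
    sq_nonneg (a ^ 2 - b ^ 2), sq_nonneg (b ^ 2 - c ^ 2), sq_nonneg (a ^ 2 - c ^ 2)]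

lemma abs_sub_le_abs_sq_sub_sq_div {s r : ℝ} (hs : 0 ≤ s) (hr : 0 < r) :
    |s - r| ≤ |s ^ 2 - r ^ 2| / r := by
  rw [le_div_iff₀ hr, show s ^ 2 - r ^ 2 = (s - r) * (s + r) by ring, abs_mul,
    abs_of_pos (by positivity : 0 < s + r)]
  exact mul_le_mul_of_nonneg_left (by linarith) (abs_nonneg _)

lemma sub_pow_four_le_sq_sub_sq_pow_four_div {s r : ℝ} (hs : 0 ≤ s) (hr : 0 < r) :
    (s - r) ^ 4 ≤ (s ^ 2 - r ^ 2) ^ 4 / r ^ 4 := by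
  have h := pow_le_pow_left₀ (abs_nonneg _) (abs_sub_le_abs_sq_sub_sq_div hs hr) 4
  rwa [div_pow, ← abs_pow, ← abs_pow, abs_of_nonneg (Even.pow_nonneg (by decide) _),
    abs_of_nonneg (Even.pow_nonneg (by decide) _)] at h

section InnerProductSpace

variable {E : Type*} [NormedAddCommGroup E] [InnerProductSpace ℝ E]

lemma norm_sub_sub_sqrt_two_mul_pow_four_le (u v : E) {R : ℝ} (hR : 0 < R) :
    (‖u - v‖ - √2 * R) ^ 4 ≤
      27 / (4 * R ^ 4) * ((‖u‖ ^ 2 - R ^ 2) ^ 4 + (‖v‖ ^ 2 - R ^ 2) ^ 4 + 16 * inner ℝ u v ^ 4) := by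
  have hρ_sq : (√2 * R) ^ 2 = 2 * R ^ 2 := by
    rw [mul_pow, Real.sq_sqrt zero_le_two]
  have hρ_pow_four : (√2 * R) ^ 4 = 4 * R ^ 4 := by
    rw [show (√2 * R) ^ 4 = ((√2 * R) ^ 2) ^ 2 by ring, hρ_sq]; ring
  have hsplit : ‖u - v‖ ^ 2 - (√2 * R) ^ 2
      = (‖u‖ ^ 2 - R ^ 2) + (‖v‖ ^ 2 - R ^ 2) + -2 * inner ℝ u v := by
    rw [norm_sub_sq_real, hρ_sq]; ring
  calc (‖u - v‖ - √2 * R) ^ 4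
      ≤ (‖u - v‖ ^ 2 - (√2 * R) ^ 2) ^ 4 / (√2 * R) ^ 4 :=
        sub_pow_four_le_sq_sub_sq_pow_four_div (norm_nonneg _) (by positivity)
    _ ≤ 27 * ((‖u‖ ^ 2 - R ^ 2) ^ 4 + (‖v‖ ^ 2 - R ^ 2) ^ 4 + (-2 * inner ℝ u v) ^ 4)
          / (√2 * R) ^ 4 := by
        rw [hsplit]
        gcongr
        exact add_add_pow_four_le _ _ _
    _ = _ := by rw [hρ_pow_four]; ring

variable [MeasurableSpace E] [BorelSpace E] [SecondCountableTopology E]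
  {Ω : Type*} [MeasurableSpace Ω] {μ : Measure Ω} {x y : Ω → E}

lemma integral_norm_sub_sub_sqrt_two_mul_pow_four_le (hx : Measurable x) (hy : Measurable y)
    {R : ℝ} (hR : 0 < R)
    (hx4 : Integrable (fun ω => (‖x ω‖ ^ 2 - R ^ 2) ^ 4) μ)
    (hy4 : Integrable (fun ω => (‖y ω‖ ^ 2 - R ^ 2) ^ 4) μ)
    (hxy4 : Integrable (fun ω => inner ℝ (x ω) (y ω) ^ 4) μ) :
    ∫ ω, (‖x ω - y ω‖ - √2 * R) ^ 4 ∂μ ≤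
      27 / (4 * R ^ 4) * (∫ ω, (‖x ω‖ ^ 2 - R ^ 2) ^ 4 ∂μ + ∫ ω, (‖y ω‖ ^ 2 - R ^ 2) ^ 4 ∂μ
        + 16 * ∫ ω, inner ℝ (x ω) (y ω) ^ 4 ∂μ) := by
  have hsum_int : Integrable (fun ω => (‖x ω‖ ^ 2 - R ^ 2) ^ 4 + (‖y ω‖ ^ 2 - R ^ 2) ^ 4) μ :=
    hx4.add hy4
  have hbound_int := (hsum_int.add (hxy4.const_mul 16)).const_mul (27 / (4 * R ^ 4))
  have hpointwise := fun ω => norm_sub_sub_sqrt_two_mul_pow_four_le (x ω) (y ω) hR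
  have hmeas : AEStronglyMeasurable (fun ω => (‖x ω - y ω‖ - √2 * R) ^ 4) μ :=
    ((((hx.sub hy).norm).sub measurable_const).pow_const 4).aestronglyMeasurable
  have hint : Integrable (fun ω => (‖x ω - y ω‖ - √2 * R) ^ 4) μ :=
    hbound_int.mono' hmeas (.of_forall fun ω => by
      rw [Real.norm_of_nonneg (Even.pow_nonneg (by decide) _)]; exact hpointwise ω)
  calc ∫ ω, (‖x ω - y ω‖ - √2 * R) ^ 4 ∂μ
      ≤ ∫ ω, 27 / (4 * R ^ 4) * ((‖x ω‖ ^ 2 - R ^ 2) ^ 4 + (‖y ω‖ ^ 2 - R ^ 2) ^ 4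
          + 16 * inner ℝ (x ω) (y ω) ^ 4) ∂μ := integral_mono hint hbound_int hpointwise
    _ = _ := by
      rw [integral_const_mul, integral_add hsum_int (hxy4.const_mul 16),
        integral_add hx4 hy4, integral_const_mul]

end InnerProductSpace

theorem mixed_distance_L4_bound_general {D : ℕ}
    (R₀ C₁ C₂ : ℝ) (hR₀ : 0 < R₀)
    {Ω : Type*} [MeasureSpace Ω]
    (x y : Ω → EuclideanSpace ℝ (Fin D))
    (hx : Measurable x) (hy : Measurable y)
    (hx4 : Integrable (fun ω => (‖x ω‖ ^ 2 - R₀ ^ 2) ^ 4) ℙ)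
    (hy4 : Integrable (fun ω => (‖y ω‖ ^ 2 - R₀ ^ 2) ^ 4) ℙ)
    (hip4 : Integrable (fun ω => (inner ℝ (x ω) (y ω) : ℝ) ^ 4) ℙ)
    (hxshell : ∫ ω, (‖x ω‖ ^ 2 - R₀ ^ 2) ^ 4 ∂ℙ ≤ C₁ * R₀ ^ 8 / D ^ 2)
    (hyshell : ∫ ω, (‖y ω‖ ^ 2 - R₀ ^ 2) ^ 4 ∂ℙ ≤ C₁ * R₀ ^ 8 / D ^ 2)
    (hip : ∫ ω, (inner ℝ (x ω) (y ω) : ℝ) ^ 4 ∂ℙ ≤ C₂ * R₀ ^ 8 / D ^ 2) :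
    ∫ ω, (‖x ω - y ω‖ - Real.sqrt 2 * R₀) ^ 4 ∂ℙ
      ≤ (27 * (2 * C₁ + 16 * C₂) * R₀ ^ 4 / 4) / D ^ 2 := by
  calc ∫ ω, (‖x ω - y ω‖ - √2 * R₀) ^ 4 ∂ℙ
      ≤ 27 / (4 * R₀ ^ 4) * (∫ ω, (‖x ω‖ ^ 2 - R₀ ^ 2) ^ 4 ∂ℙ
          + ∫ ω, (‖y ω‖ ^ 2 - R₀ ^ 2) ^ 4 ∂ℙ + 16 * ∫ ω, inner ℝ (x ω) (y ω) ^ 4 ∂ℙ) :=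
        integral_norm_sub_sub_sqrt_two_mul_pow_four_le hx hy hR₀ hx4 hy4 hip4
    _ ≤ 27 / (4 * R₀ ^ 4) * (C₁ * R₀ ^ 8 / D ^ 2 + C₁ * R₀ ^ 8 / D ^ 2
          + 16 * (C₂ * R₀ ^ 8 / D ^ 2)) := by gcongr
    _ = (27 * (2 * C₁ + 16 * C₂) * R₀ ^ 4 / 4) / D ^ 2 := by field_simp; ring

/-- Fourth-moment bound for mixed distances.
Let `x, y` be independent random vectors in `ℝ^D` with
`E[(‖x‖² − R₀²)⁴] ≤ C₁R₀⁸/D²`, `E[(‖y‖² − R₀²)⁴] ≤ C₁R₀⁸/D²`, and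
`E[⟨x,y⟩⁴] ≤ C₂R₀⁸/D²`.  Then with `S = ‖x − y‖₂` and `ρ = √2·R₀`, one has
`E[(S − ρ)⁴] ≤ (27(2C₁ + 16C₂)R₀⁴/4)/D²`. -/
theorem mixed_distance_L4_bound {D : ℕ} (hD : 1 ≤ D)
    (R₀ C₁ C₂ : ℝ) (hR₀ : 0 < R₀) (hC₁ : 0 ≤ C₁) (hC₂ : 0 ≤ C₂)
    {Ω : Type*} [MeasureSpace Ω] [IsProbabilityMeasure (ℙ : Measure Ω)]
    (x y : Ω → EuclideanSpace ℝ (Fin D))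
    (hx : Measurable x) (hy : Measurable y)
    (hindep : IndepFun x y ℙ)
    (hx4 : Integrable (fun ω => (‖x ω‖ ^ 2 - R₀ ^ 2) ^ 4) ℙ)
    (hy4 : Integrable (fun ω => (‖y ω‖ ^ 2 - R₀ ^ 2) ^ 4) ℙ)
    (hip4 : Integrable (fun ω => (inner ℝ (x ω) (y ω) : ℝ) ^ 4) ℙ)
    (hxshell : ∫ ω, (‖x ω‖ ^ 2 - R₀ ^ 2) ^ 4 ∂ℙ ≤ C₁ * R₀ ^ 8 / D ^ 2)
    (hyshell : ∫ ω, (‖y ω‖ ^ 2 - R₀ ^ 2) ^ 4 ∂ℙ ≤ C₁ * R₀ ^ 8 / D ^ 2)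
    (hip : ∫ ω, (inner ℝ (x ω) (y ω) : ℝ) ^ 4 ∂ℙ ≤ C₂ * R₀ ^ 8 / D ^ 2) :
    ∫ ω, (‖x ω - y ω‖ - Real.sqrt 2 * R₀) ^ 4 ∂ℙ
      ≤ (27 * (2 * C₁ + 16 * C₂) * R₀ ^ 4 / 4) / D ^ 2 :=
  mixed_distance_L4_bound_general R₀ C₁ C₂ hR₀ x y hx hy hx4 hy4 hip4 hxshell hyshell hip
end
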